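/- Let V be a monoidal category, H = (H, m, u) an algebra in V, and h ∈ Nat(𝟭_V, 𝟭_V ⊗ H) a natural transformation {h_X : X → X ⊗ H}. Define L_h, R_h : (−) ⊗ H → (−) ⊗ H by (L_h)_X := (id_X ⊗ m) ∘ (h_X ⊗ id_H) and (R_h)_X := (id_X ⊗ m) ∘ h_{X⊗H}. Then the following are equivalent: (i) L_h = R_h; (ii) for every right H-module (M, r), the morphism h^♯_{(M,r)} := r ∘ h_M : M → M is a morphism of right H-modules, i.e., h^♯ lifts to a natural endomorphism of the identity functor of V_H. -/

import Mathlib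

/-!
For a module `(M, r)`, naturality of `h` along `r` rewrites `h^♯ ∘ r` as `r ∘ R_h`, while the
associativity of `r` rewrites `r ∘ (h^♯ ⊗ H)` as `r ∘ L_h`; so `L_h = R_h` makes `h^♯` a module map.
Conversely, on the free module `X ⊗ H` the map `h^♯` is `R_h` itself. A module map out of `X ⊗ H`
is determined by its restriction along the unit `X → X ⊗ H`, and by naturality that restriction
of `R_h` is `h_X`, whose extension is `L_h`.
-/

open CategoryTheory Category MonoidalCategory

universe v u

variable (V : Type u) [Category.{v} V] [MonoidalCategory V]

/-- An algebra (monoid object) `H = (H, m, u)` in a monoidal category `V`. -/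
structure AlgebraObject where
  X : V
  mul : X ⊗ X ⟶ X
  one : 𝟙_ V ⟶ X
  one_mul : (one ▷ X) ≫ mul = (λ_ X).hom
  mul_one : (X ◁ one) ≫ mul = (ρ_ X).hom
  mul_assoc : (mul ▷ X) ≫ mul = (α_ X X X).hom ≫ (X ◁ mul) ≫ mul

variable {V}

/-- A right module `(M, r)` over an algebra `A` in `V`. -/
structure RightModule (A : AlgebraObject V) where
  M : V
  act : M ⊗ A.X ⟶ M
  act_act : (act ▷ A.X) ≫ act = (α_ M A.X A.X).hom ≫ (M ◁ A.mul) ≫ act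
  act_one : (M ◁ A.one) ≫ act = (ρ_ M).hom

/-- A morphism of underlying objects `u : M.M ⟶ N.M` is a morphism of right `A`-modules if it
commutes with the actions. -/
def IsModuleHom {A : AlgebraObject V} (M N : RightModule A) (u : M.M ⟶ N.M) : Prop :=
  M.act ≫ u = (u ▷ A.X) ≫ N.act

variable (A : AlgebraObject V)

/-- Naturality of a family `h_X : X ⟶ X ⊗ H`, i.e. `h ∈ Nat(𝟭_V, 𝟭_V ⊗ H)`. -/
def IsNatToTensor (h : ∀ X : V, X ⟶ X ⊗ A.X) : Prop :=
  ∀ {X Y : V} (u : X ⟶ Y), u ≫ h Y = h X ≫ (u ▷ A.X)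

/-- Left multiplication `L_h := (id ⊗ m) ∘ (h ⊗ id_H) : (−) ⊗ H ⟶ (−) ⊗ H`. -/
noncomputable def Lmul (h : ∀ X : V, X ⟶ X ⊗ A.X) (X : V) : X ⊗ A.X ⟶ X ⊗ A.X :=
  (h X ▷ A.X) ≫ (α_ X A.X A.X).hom ≫ (X ◁ A.mul)

/-- Right multiplication `R_h := (id ⊗ m) ∘ h_{X⊗H} : (−) ⊗ H ⟶ (−) ⊗ H`. -/
noncomputable def Rmul (h : ∀ X : V, X ⟶ X ⊗ A.X) (X : V) : X ⊗ A.X ⟶ X ⊗ A.X :=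
  h (X ⊗ A.X) ≫ (α_ X A.X A.X).hom ≫ (X ◁ A.mul)

namespace RightModule

noncomputable abbrev free (X : V) : RightModule A where
  M := X ⊗ A.X
  act := (α_ X A.X A.X).hom ≫ (X ◁ A.mul)
  act_act := by
    rw [comp_whiskerRight, Category.assoc, associator_naturality_middle_assoc,
      ← MonoidalCategory.whiskerLeft_comp, A.mul_assoc,
      MonoidalCategory.whiskerLeft_comp, MonoidalCategory.whiskerLeft_comp,
      pentagon_assoc, associator_naturality_right_assoc]
  act_one := by
    rw [associator_naturality_right_assoc, ← MonoidalCategory.whiskerLeft_comp, A.mul_one]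
    simp

noncomputable def freeUnit (X : V) : X ⟶ X ⊗ A.X :=
  (ρ_ X).inv ≫ (X ◁ A.one)

lemma freeUnit_whiskerRight_act (X : V) :
    (freeUnit A X ▷ A.X) ≫ (free A X).act = 𝟙 (X ⊗ A.X) := by
  dsimp only [free, freeUnit]
  rw [comp_whiskerRight, Category.assoc, associator_naturality_middle_assoc,
    ← MonoidalCategory.whiskerLeft_comp, A.one_mul, MonoidalCategory.triangle]
  simp [← comp_whiskerRight]

variable {A}

lemma eq_of_isModuleHom_free {X : V} {N : RightModule A} {f : X ⊗ A.X ⟶ N.M}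
    (hf : IsModuleHom (free A X) N f) : f = ((freeUnit A X ≫ f) ▷ A.X) ≫ N.act := by
  calc f = ((freeUnit A X ▷ A.X) ≫ (free A X).act) ≫ f := by
        rw [freeUnit_whiskerRight_act, Category.id_comp]
    _ = ((freeUnit A X ≫ f) ▷ A.X) ≫ N.act := by
      rw [Category.assoc, hf, comp_whiskerRight, Category.assoc]

end RightModule

open RightModule

variable {A}

lemma lmul_comp_act (h : ∀ X : V, X ⟶ X ⊗ A.X) (M : RightModule A) :
    Lmul A h M.M ≫ M.act = ((h M.M ≫ M.act) ▷ A.X) ≫ M.act := by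
  simp only [Lmul, Category.assoc, ← M.act_act, comp_whiskerRight]

lemma rmul_comp_act {h : ∀ X : V, X ⟶ X ⊗ A.X} (hnat : IsNatToTensor A h)
    (M : RightModule A) : Rmul A h M.M ≫ M.act = M.act ≫ h M.M ≫ M.act := by
  rw [Rmul, Category.assoc, Category.assoc, ← M.act_act,
    ← Category.assoc, ← hnat, Category.assoc]

lemma rmul_eq_comp_free_act (h : ∀ X : V, X ⟶ X ⊗ A.X) (X : V) :
    Rmul A h X = h (free A X).M ≫ (free A X).act :=
  rfl

lemma freeUnit_comp_rmul {h : ∀ X : V, X ⟶ X ⊗ A.X} (hnat : IsNatToTensor A h) (X : V) :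
    freeUnit A X ≫ Rmul A h X = h X := by
  rw [rmul_eq_comp_free_act, ← Category.assoc, hnat, Category.assoc, freeUnit_whiskerRight_act,
    Category.comp_id]

/-- For a natural transformation `h : 𝟭_V ⟶ 𝟭_V ⊗ H`, the following are equivalent:
(i) `L_h = R_h`; (ii) for every right `H`-module `(M, r)` the morphism
`h^♯_{(M,r)} = r ∘ h_M : M ⟶ M` is a morphism of right `H`-modules
(i.e. `h^♯` lifts to a natural endomorphism of the identity functor of `V_H`). -/
theorem central_iff_sharp_moduleHom (h : ∀ X : V, X ⟶ X ⊗ A.X) (hnat : IsNatToTensor A h) :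
    (∀ X : V, Lmul A h X = Rmul A h X) ↔
      (∀ M : RightModule A, IsModuleHom M M (h M.M ≫ M.act)) := by
  constructor
  · intro hLR M
    rw [IsModuleHom, ← rmul_comp_act hnat, ← hLR, lmul_comp_act]
  · intro hsharp X
    have hfree := eq_of_isModuleHom_free (hsharp (free A X))
    rw [← rmul_eq_comp_free_act, freeUnit_comp_rmul hnat] at hfree
    exact hfree.symm
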